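/- Fix λ > 0 and for φ > 0 let v(φ) = (√((φ+λ-1)²+4λ) - (φ+λ-1))/(2λ). Then the function g(φ) = (1-φ)·v(φ)² + 2·v(φ) + 1 is strictly decreasing in φ on (0,∞), and consequently the bias α²/g(φ) of ridge regression with isotropic features is strictly increasing in φ for any α² > 0. -/

import Mathlib

/-!
The fixed-point equation `λ v² + (φ + λ - 1) v = 1` can be solved for `φ`:
`φ = v⁻¹ - λ v - λ + 1`, a strictly decreasing function of `v > 0`, so `v(φ)` is strictly
decreasing. Eliminating `φ` with the same equation gives
`(1 - φ) v² + 2 v + 1 = (v + 1)(λ v² + 1)`, which is strictly increasing in `v > 0`.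
-/

/-- The fixed-point solution for isotropic features. -/
noncomputable def vIso (lam φ : ℝ) : ℝ :=
  (Real.sqrt ((φ + lam - 1) ^ 2 + 4 * lam) - (φ + lam - 1)) / (2 * lam)

section

variable {lam : ℝ}

lemma vIso_pos (hlam : 0 < lam) (φ : ℝ) : 0 < vIso lam φ := by
  have hlt : φ + lam - 1 < Real.sqrt ((φ + lam - 1) ^ 2 + 4 * lam) :=
    Real.lt_sqrt_of_sq_lt (by linarith)
  exact div_pos (by linarith) (by positivity)

lemma vIso_fixedPoint (hlam : 0 < lam) (φ : ℝ) :
    lam * vIso lam φ ^ 2 + (φ + lam - 1) * vIso lam φ = 1 := by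
  have hs : Real.sqrt ((φ + lam - 1) ^ 2 + 4 * lam) ^ 2 = (φ + lam - 1) ^ 2 + 4 * lam :=
    Real.sq_sqrt (by positivity)
  unfold vIso
  generalize Real.sqrt ((φ + lam - 1) ^ 2 + 4 * lam) = s at hs
  field_simp
  linear_combination hs

lemma eq_inv_vIso_sub (hlam : 0 < lam) (φ : ℝ) :
    φ = (vIso lam φ)⁻¹ - lam * vIso lam φ - lam + 1 := by
  have hv := (vIso_pos hlam φ).ne'
  field_simp
  linear_combination vIso_fixedPoint hlam φ

lemma strictAntiOn_inv_sub_mul (hlam : 0 < lam) :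
    StrictAntiOn (fun v : ℝ => v⁻¹ - lam * v - lam + 1) (Set.Ioi 0) := by
  intro x hx y hy hxy
  have hinv : y⁻¹ < x⁻¹ := strictAntiOn_inv_pos hx hy hxy
  have hmul : lam * x < lam * y := mul_lt_mul_of_pos_left hxy hlam
  dsimp only
  linarith

lemma vIso_strictAnti (hlam : 0 < lam) : StrictAnti (vIso lam) := by
  intro a b hab
  rw [eq_inv_vIso_sub hlam a, eq_inv_vIso_sub hlam b] at hab
  exact ((strictAntiOn_inv_sub_mul hlam).lt_iff_gt (vIso_pos hlam a) (vIso_pos hlam b)).1 hab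

lemma one_sub_mul_vIso_sq_add (hlam : 0 < lam) (φ : ℝ) :
    (1 - φ) * vIso lam φ ^ 2 + 2 * vIso lam φ + 1 =
      (vIso lam φ + 1) * (lam * vIso lam φ ^ 2 + 1) := by
  linear_combination (-vIso lam φ) * vIso_fixedPoint hlam φ

lemma strictMonoOn_add_one_mul (hlam : 0 < lam) :
    StrictMonoOn (fun v : ℝ => (v + 1) * (lam * v ^ 2 + 1)) (Set.Ici 0) := by
  intro x (hx : 0 ≤ x) y _ hxy
  dsimp only
  gcongr

end

/-- For fixed `λ > 0`, `g(φ) = (1-φ) v(φ)² + 2 v(φ) + 1` is strictly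
decreasing in `φ` on `(0,∞)`, so the bias `α²/g(φ)` of isotropic ridge
regression is strictly increasing in `φ`. -/
theorem isotropic_bias_monotone (lam α2 : ℝ) (hlam : 0 < lam) (hα : 0 < α2) :
    StrictAntiOn
      (fun φ : ℝ => (1 - φ) * (vIso lam φ) ^ 2 + 2 * vIso lam φ + 1)
      (Set.Ioi 0) ∧
    StrictMonoOn
      (fun φ : ℝ => α2 / ((1 - φ) * (vIso lam φ) ^ 2 + 2 * vIso lam φ + 1))
      (Set.Ioi 0) := by
  have hg : StrictAnti (fun φ : ℝ => (1 - φ) * (vIso lam φ) ^ 2 + 2 * vIso lam φ + 1) := by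
    intro a b hab
    simp only [one_sub_mul_vIso_sq_add hlam]
    exact strictMonoOn_add_one_mul hlam (vIso_pos hlam b).le (vIso_pos hlam a).le
      (vIso_strictAnti hlam hab)
  have hg_pos (φ : ℝ) : 0 < (1 - φ) * (vIso lam φ) ^ 2 + 2 * vIso lam φ + 1 := by
    rw [one_sub_mul_vIso_sq_add hlam]
    have := vIso_pos hlam φ
    positivity
  exact ⟨hg.strictAntiOn _, fun a _ b _ hab => div_lt_div_of_pos_left hα (hg_pos b) (hg hab)⟩
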